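/- arXiv:1209.5839 — 4 statements merged into one kernel-verified Lean document; each statement's English description precedes it below -/
import Mathlib

section
/- Let K be a nonempty compact subset of ℂ. There exists a complex number μ ≠ 0 with sup_{λ ∈ K} |μ - λ| < |μ| if and only if 0 does not belong to the closed convex hull of K. -/
open Set Module

/-!
If `K` lies in the open ball `B(μ, ‖μ‖)`, so does its convex hull, and that ball misses `0`.
Conversely, by Carathéodory the convex hull of a compact set in finite dimensions is a continuous
image of `stdSimplex × Kⁿ`, hence compact, so `0` is strictly separated from it: some `w` has
`⟪w, λ⟫ ≥ c > 0` on `K`. Since `‖t • w - λ‖² = ‖t • w‖² - 2t⟪w, λ⟫ + ‖λ‖²` and `K` is bounded,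
`K ⊆ B(t • w, ‖t • w‖)` for `t` large. Finally, the supremum over the compact `K` is attained, so
it is `< ‖μ‖` exactly when every `‖μ - λ‖` is.
-/

lemma exists_mem_stdSimplex_sum_smul_eq_of_embedding {𝕜 E ι κ : Type*} [Semiring 𝕜]
    [PartialOrder 𝕜] [AddCommMonoid E] [Module 𝕜 E] [Fintype ι] [Fintype κ]
    (g : ι ↪ κ) {K : Set E} (hK : K.Nonempty) {w : ι → 𝕜} {z : ι → E} (hw : w ∈ stdSimplex 𝕜 ι)
    (hz : ∀ i, z i ∈ K) :
    ∃ w' ∈ stdSimplex 𝕜 κ, ∃ z' : κ → E, (∀ j, z' j ∈ K) ∧ ∑ j, w' j • z' j = ∑ i, w i • z i := by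
  obtain ⟨y, hy⟩ := hK
  have hw' : ∀ j ∉ range g, Function.extend g w 0 j = 0 := fun j hj ↦
    Function.extend_apply' _ _ _ hj
  refine ⟨Function.extend g w 0, ⟨fun j ↦ ?_, ?_⟩, Function.extend g z fun _ ↦ y, fun j ↦ ?_, ?_⟩
  · by_cases hj : j ∈ range g
    · obtain ⟨i, rfl⟩ := hj
      simpa [g.injective.extend_apply] using hw.1 i
    · simp [hw' j hj]
  · rw [← hw.2]
    exact (Fintype.sum_of_injective g g.injective _ _ hw' fun i ↦
      (g.injective.extend_apply ..).symm).symm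
  · by_cases hj : j ∈ range g
    · obtain ⟨i, rfl⟩ := hj
      simpa [g.injective.extend_apply] using hz i
    · simpa [Function.extend_apply' _ _ _ hj] using hy
  · exact (Fintype.sum_of_injective g g.injective _ _ (fun j hj ↦ by simp [hw' j hj]) fun i ↦
      by simp [g.injective.extend_apply]).symm

section Caratheodory

variable {𝕜 E : Type*} [Field 𝕜] [LinearOrder 𝕜] [IsStrictOrderedRing 𝕜] [AddCommGroup E]
  [Module 𝕜 E] [FiniteDimensional 𝕜 E]

lemma exists_mem_stdSimplex_sum_smul_eq_of_mem_convexHull {K : Set E} {x : E}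
    (hx : x ∈ convexHull 𝕜 K) :
    ∃ w ∈ stdSimplex 𝕜 (Fin (finrank 𝕜 E + 1)), ∃ z : Fin (finrank 𝕜 E + 1) → E,
      (∀ i, z i ∈ K) ∧ ∑ i, w i • z i = x := by
  have hK : K.Nonempty := convexHull_nonempty_iff.mp ⟨x, hx⟩
  obtain ⟨ι, _, z, w, hzK, hind, hw₀, hw₁, rfl⟩ := eq_pos_convex_span_of_mem_convexHull hx
  have hcard : Fintype.card ι ≤ Fintype.card (Fin (finrank 𝕜 E + 1)) := by
    simpa using hind.card_le_finrank_succ.trans (Nat.succ_le_succ (Submodule.finrank_le _))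
  obtain ⟨g⟩ := Function.Embedding.nonempty_iff_card_le.mpr hcard
  exact exists_mem_stdSimplex_sum_smul_eq_of_embedding g hK ⟨fun i ↦ (hw₀ i).le, hw₁⟩
    fun i ↦ hzK (mem_range_self i)

theorem convexHull_eq_image_stdSimplex (K : Set E) :
    convexHull 𝕜 K = (fun p : (Fin (finrank 𝕜 E + 1) → 𝕜) × (Fin (finrank 𝕜 E + 1) → E) ↦
      ∑ i, p.1 i • p.2 i) '' (stdSimplex 𝕜 _ ×ˢ univ.pi fun _ ↦ K) := by
  refine Subset.antisymm (fun x hx ↦ ?_) ?_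
  · obtain ⟨w, hw, z, hz, rfl⟩ := exists_mem_stdSimplex_sum_smul_eq_of_mem_convexHull hx
    exact ⟨(w, z), ⟨hw, fun i _ ↦ hz i⟩, rfl⟩
  · rintro _ ⟨⟨w, z⟩, ⟨hw, hz⟩, rfl⟩
    exact mem_convexHull_of_exists_fintype w z hw.1 hw.2 (fun i ↦ hz i (mem_univ i)) rfl

end Caratheodory

theorem IsCompact.convexHull {E : Type*} [NormedAddCommGroup E] [NormedSpace ℝ E]
    [FiniteDimensional ℝ E] {K : Set E} (hK : IsCompact K) : IsCompact (convexHull ℝ K) := by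
  rw [convexHull_eq_image_stdSimplex]
  exact ((isCompact_stdSimplex ℝ _).prod (isCompact_univ_pi fun _ ↦ hK)).image (by fun_prop)

section InnerProductSpace

variable {E : Type*} [NormedAddCommGroup E] [InnerProductSpace ℝ E]

lemma norm_smul_sub_lt_norm_smul {w x : E} {t c : ℝ} (ht : 0 ≤ t) (hc : c ≤ inner ℝ w x)
    (hx : ‖x‖ ^ 2 < 2 * t * c) : ‖t • w - x‖ < ‖t • w‖ := by
  have : ‖t • w - x‖ ^ 2 < ‖t • w‖ ^ 2 := by
    rw [norm_sub_sq_real, real_inner_smul_left]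
    nlinarith
  exact lt_of_pow_lt_pow_left₀ 2 (norm_nonneg _) this

theorem exists_subset_ball_norm_iff_zero_notMem_convexHull [FiniteDimensional ℝ E] {K : Set E}
    (hK : IsCompact K) : (∃ μ : E, K ⊆ Metric.ball μ ‖μ‖) ↔ (0 : E) ∉ convexHull ℝ K := by
  constructor
  · rintro ⟨μ, hμ⟩ h0
    have := convexHull_min hμ (convex_ball μ ‖μ‖) h0
    simp at this
  · intro h0
    obtain ⟨f, u, hfu, hu0⟩ :=
      geometric_hahn_banach_closed_point (convex_convexHull ℝ K) hK.convexHull.isClosed h0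
    obtain ⟨M, hM⟩ := hK.isBounded.exists_norm_le
    set w := (InnerProductSpace.toDual ℝ E).symm (-f)
    have hc : 0 < -u := by simpa using hu0
    refine ⟨((M ^ 2 + 1) / -u) • w, fun x hx ↦ ?_⟩
    rw [Metric.mem_ball', dist_eq_norm]
    refine norm_smul_sub_lt_norm_smul (c := -u) (by positivity) ?_ ?_
    · simpa [w, InnerProductSpace.toDual_symm_apply] using (hfu x (subset_convexHull ℝ K hx)).le
    · calc ‖x‖ ^ 2 ≤ M ^ 2 := pow_le_pow_left₀ (norm_nonneg x) (hM x hx) 2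
        _ < 2 * ((M ^ 2 + 1) / -u) * -u := by
          rw [mul_assoc, div_mul_cancel₀ _ hc.ne']
          linarith [sq_nonneg M]

end InnerProductSpace

/-- For a nonempty compact `K ⊆ ℂ`, there exists `μ ≠ 0` with
`sup_{λ ∈ K} |μ - λ| < |μ|` if and only if `0` is not in the (closed) convex hull
of `K`. -/
theorem stmt4 (K : Set ℂ) (hK : IsCompact K) (hne : K.Nonempty) :
    (∃ μ : ℂ, μ ≠ 0 ∧ sSup ((fun lam : ℂ => ‖μ - lam‖) '' K) < ‖μ‖)
      ↔ (0 : ℂ) ∉ convexHull ℝ K := by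
  have hsSup (μ : ℂ) : sSup ((fun lam : ℂ => ‖μ - lam‖) '' K) < ‖μ‖ ↔ K ⊆ Metric.ball μ ‖μ‖ := by
    rw [hK.sSup_lt_iff_of_continuous hne (by fun_prop)]
    simp only [subset_def, Metric.mem_ball', dist_eq_norm]
  simp_rw [hsSup, ← exists_subset_ball_norm_iff_zero_notMem_convexHull hK]
  refine exists_congr fun μ ↦ and_iff_right_of_imp fun hμ hμ0 ↦ ?_
  obtain ⟨x, hx⟩ := hne
  simpa [hμ0] using hμ hx
end

section
/- Let S = {z ∈ ℂ : |z - μ₀| ≤ R} be a closed disk with 0 ∉ S (so |μ₀| > R). Then for every n ≥ 1 and every choice of nonzero complex parameters τ₁, …, τ_n, we have max_{z ∈ S} |∏_{m=1}^n (1 - τ_m z)| ≥ (R/|μ₀|)^n, with equality when τ₁ = ⋯ = τ_n = 1/μ₀. -/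
/-!
The substitution `z = μ₀ + R / w` maps the unit circle onto the boundary circle of `S`, and
`F(w) = wⁿ P(μ₀ + R / w) = ∏ (w - τ_m (μ₀ w + R))` is a polynomial in `w`. At `w = -R / μ₀`,
which lies inside the unit disk because `R < |μ₀|`, every factor `μ₀ w + R` vanishes, so
`F(-R / μ₀) = (-R / μ₀)ⁿ`. The maximum modulus principle for `F` on the unit disk then gives
`(R / |μ₀|)ⁿ ≤ max_{|w| = 1} |F(w)| = max_{∂S} |P|`. For `τ_m = 1 / μ₀` the bound is attained,
since `|1 - z / μ₀| = |μ₀ - z| / |μ₀| ≤ R / |μ₀|` on `S`.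
-/

open Metric Set

variable {ι : Type*} [Fintype ι]

lemma add_mul_inv_mem_sphere (c : ℂ) {r : ℝ} (hr : 0 ≤ r) {w : ℂ} (hw : ‖w‖ = 1) :
    c + r * w⁻¹ ∈ sphere c r := by
  simp [hw, abs_of_nonneg hr]

lemma pow_card_mul_prod_one_sub_mul (τ : ι → ℂ) (c r : ℂ) {w : ℂ} (hw : w ≠ 0) :
    w ^ Fintype.card ι * ∏ m, (1 - τ m * (c + r * w⁻¹)) = ∏ m, (w - τ m * (c * w + r)) := by
  rw [← Finset.card_univ, ← Finset.prod_const, ← Finset.prod_mul_distrib]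
  refine Finset.prod_congr rfl fun m _ => ?_
  field_simp

lemma prod_sub_mul_neg_div (τ : ι → ℂ) {c : ℂ} (hc : c ≠ 0) (r : ℂ) :
    ∏ m, (-r / c - τ m * (c * (-r / c) + r)) = (-r / c) ^ Fintype.card ι := by
  simp [mul_div_cancel₀ _ hc, div_pow]

theorem pow_div_norm_le_of_forall_mem_sphere (τ : ι → ℂ) {c : ℂ} {r C : ℝ} (hr : 0 ≤ r)
    (hrc : r < ‖c‖) (hC : ∀ z ∈ sphere c r, ‖∏ m, (1 - τ m * z)‖ ≤ C) :
    (r / ‖c‖) ^ Fintype.card ι ≤ C := by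
  have hc : c ≠ 0 := norm_pos_iff.mp (hr.trans_lt hrc)
  set F : ℂ → ℂ := fun w => ∏ m, (w - τ m * (c * w + r))
  have hF : Differentiable ℂ F := by fun_prop
  have hF_frontier : ∀ w ∈ frontier (ball (0 : ℂ) 1), ‖F w‖ ≤ C := by
    intro w hw
    rw [frontier_ball 0 one_ne_zero, mem_sphere_zero_iff_norm] at hw
    have hw0 : w ≠ 0 := norm_ne_zero_iff.mp (by simp [hw])
    calc ‖F w‖ = ‖w ^ Fintype.card ι * ∏ m, (1 - τ m * (c + r * w⁻¹))‖ := by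
          rw [pow_card_mul_prod_one_sub_mul τ c r hw0]
      _ = ‖∏ m, (1 - τ m * (c + r * w⁻¹))‖ := by simp [hw]
      _ ≤ C := hC _ (add_mul_inv_mem_sphere c hr hw)
  have hpole : -(r : ℂ) / c ∈ closure (ball (0 : ℂ) 1) := by
    refine subset_closure ?_
    rw [mem_ball_zero_iff, norm_div, norm_neg, Complex.norm_real, Real.norm_of_nonneg hr,
      div_lt_one (hr.trans_lt hrc)]
    exact hrc
  have hmax := Complex.norm_le_of_forall_mem_frontier_norm_le isBounded_ball hF.diffContOnCl
    hF_frontier hpole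
  calc (r / ‖c‖) ^ Fintype.card ι = ‖F (-r / c)‖ := by
        simp [F, prod_sub_mul_neg_div τ hc, abs_of_nonneg hr]
    _ ≤ C := hmax

theorem pow_div_norm_le_sSup_image_closedBall (τ : ι → ℂ) {c : ℂ} {r : ℝ} (hr : 0 ≤ r)
    (hrc : r < ‖c‖) :
    (r / ‖c‖) ^ Fintype.card ι ≤ sSup ((fun z => ‖∏ m, (1 - τ m * z)‖) '' closedBall c r) := by
  have hbdd : BddAbove ((fun z => ‖∏ m, (1 - τ m * z)‖) '' closedBall c r) :=
    ((isCompact_closedBall c r).image (by fun_prop)).bddAbove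
  exact pow_div_norm_le_of_forall_mem_sphere τ hr hrc fun z hz =>
    le_csSup hbdd (mem_image_of_mem _ (sphere_subset_closedBall hz))

lemma norm_one_sub_inv_mul_le {c z : ℂ} {r : ℝ} (hc : c ≠ 0) (hz : z ∈ closedBall c r) :
    ‖1 - c⁻¹ * z‖ ≤ r / ‖c‖ := by
  rw [show 1 - c⁻¹ * z = (c - z) / c by field_simp, norm_div, norm_sub_rev]
  gcongr
  exact mem_closedBall_iff_norm.mp hz

theorem stmt6_general (μ₀ : ℂ) (R : ℝ) (hR : 0 < R) (h : R < ‖μ₀‖) (n : ℕ) :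
    (∀ τ : Fin n → ℂ, (∀ m, τ m ≠ 0) →
      (R / ‖μ₀‖) ^ n ≤
        sSup ((fun z : ℂ => ‖∏ m : Fin n, (1 - τ m * z)‖) ''
          {z : ℂ | ‖z - μ₀‖ ≤ R})) ∧
    sSup ((fun z : ℂ => ‖∏ _m : Fin n, (1 - μ₀⁻¹ * z)‖) ''
        {z : ℂ | ‖z - μ₀‖ ≤ R}) = (R / ‖μ₀‖) ^ n := by
  have hS : {z : ℂ | ‖z - μ₀‖ ≤ R} = closedBall μ₀ R := by
    ext z; simp [dist_eq_norm]
  have hlower (τ : Fin n → ℂ) :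
      (R / ‖μ₀‖) ^ n ≤ sSup ((fun z => ‖∏ m, (1 - τ m * z)‖) '' closedBall μ₀ R) := by
    simpa using pow_div_norm_le_sSup_image_closedBall τ hR.le h
  have hμ₀ : μ₀ ≠ 0 := norm_pos_iff.mp (hR.trans h)
  rw [hS]
  refine ⟨fun τ _ => hlower τ, le_antisymm ?_ (hlower fun _ => μ₀⁻¹)⟩
  refine csSup_le ⟨_, mem_image_of_mem _ (mem_closedBall_self hR.le)⟩ ?_
  rintro _ ⟨z, hz, rfl⟩
  simp only [Finset.prod_const, Finset.card_univ, Fintype.card_fin, norm_pow]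
  exact pow_le_pow_left₀ (norm_nonneg _) (norm_one_sub_inv_mul_le hμ₀ hz) n

/-- For a disk `S = {z : |z - μ₀| ≤ R}` with `0 < R < |μ₀|`, every choice of nonzero
parameters `τ₁, …, τ_n` satisfies `max_{z ∈ S} |∏ (1 - τ_m z)| ≥ (R/|μ₀|)^n`, and
equality holds when all `τ_m = 1/μ₀`. -/
theorem stmt6 (μ₀ : ℂ) (R : ℝ) (hR : 0 < R) (h : R < ‖μ₀‖) (n : ℕ) (hn : 1 ≤ n) :
    (∀ τ : Fin n → ℂ, (∀ m, τ m ≠ 0) →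
      (R / ‖μ₀‖) ^ n ≤
        sSup ((fun z : ℂ => ‖∏ m : Fin n, (1 - τ m * z)‖) ''
          {z : ℂ | ‖z - μ₀‖ ≤ R})) ∧
    sSup ((fun z : ℂ => ‖∏ _m : Fin n, (1 - μ₀⁻¹ * z)‖) ''
        {z : ℂ | ‖z - μ₀‖ ≤ R}) = (R / ‖μ₀‖) ^ n :=
  stmt6_general μ₀ R hR h n
end

section
/- Let 0 < a < b, φ ∈ ℝ, and let the μ_m = (b+a)/2 + ((b-a)/2)·cos((2m-1)π/(2n)) be the optimal points for the real segment [a,b]. Then the rotated points e^{iφ} μ_m minimize max over the rotated segment e^{iφ}[a,b] of |∏(1 - z/ν_m)| among all choices of points ν_m: explicitly, min over {ν_m} of max_{z ∈ e^{iφ}[a,b]} |∏_{m=1}^n (1 - z/ν_m)| = max_{x ∈ [a,b]} |∏_{m=1}^n (1 - x/μ_m)|. -/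
/-!
Rotating by `e^{iφ}` turns the factors `1 - z / (e^{iφ} μ_m)` on the rotated segment back into
the real factors `1 - x / μ_m`, so the rotated points attain the real value `M`. Conversely, for
any `ν` the product is, as a function of `x ∈ [a, b]`, a complex polynomial `P` of degree
`≤ n` with `P(0) = 1`; its real part `q` is a real polynomial with the same two properties and
`|q| ≤ ‖P‖`. For the Chebyshev points the product is `±M` times `T_n` composed with the affine
map `[a, b] → [-1, 1]`, so it takes the values `±M` with alternating signs at the `n + 1`
extremal points of `T_n`. If `|q| < M` at all of them, the difference of the two polynomials
changes sign `n` times in `[a, b]` and also vanishes at `0 ∉ [a, b]`: `n + 1` roots for degree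
`≤ n`, so `q` would be the Chebyshev product itself, which reaches `M` at `x = b`.
-/

open Real Polynomial Set

theorem exists_mem_Ioo_eq_zero_of_mul_neg {f : ℝ → ℝ} {u v : ℝ} (huv : u ≤ v)
    (hf : ContinuousOn f (Icc u v)) (h : f u * f v < 0) : ∃ y ∈ Ioo u v, f y = 0 := by
  rcases lt_or_gt_of_ne (left_ne_zero_of_mul h.ne) with hu | hu
  · exact intermediate_value_Ioo huv hf ⟨hu, by nlinarith⟩
  · exact intermediate_value_Ioo' huv hf ⟨by nlinarith, hu⟩

namespace Polynomial

theorem natDegree_prod_one_sub_C_mul_X_le {R ι : Type*} [CommRing R]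
    (s : Finset ι) (c : ι → R) : (∏ i ∈ s, (1 - C (c i) * X)).natDegree ≤ s.card :=
  (natDegree_prod_le _ _).trans <|
    (Finset.sum_le_card_nsmul s _ 1 fun i _ => by compute_degree).trans (by simp)

theorem exists_natDegree_le_eval_eq_re (P : ℂ[X]) :
    ∃ q : ℝ[X], q.natDegree ≤ P.natDegree ∧ ∀ x : ℝ, q.eval x = (P.eval (x : ℂ)).re := by
  refine ⟨∑ k ∈ Finset.range (P.natDegree + 1), C (P.coeff k).re * X ^ k, ?_, fun x => ?_⟩
  · refine natDegree_sum_le_of_forall_le _ _ fun k hk => ?_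
    exact (natDegree_C_mul_X_pow_le _ _).trans (Finset.mem_range_succ_iff.mp hk)
  · rw [eval_finsetSum, eval_eq_sum_range' (lt_add_one P.natDegree), Complex.re_sum]
    simp [← Complex.ofReal_pow]

theorem eq_zero_of_sign_changes {n : ℕ} {D : ℝ[X]} (hD : D.natDegree ≤ n)
    {x : Fin (n + 1) → ℝ} (hx : StrictAnti x) {z : ℝ} (hz : z < x (Fin.last n))
    (hDz : D.eval z = 0) (hsign : ∀ k : Fin n, D.eval (x k.succ) * D.eval (x k.castSucc) < 0) :
    D = 0 := by
  have hroot (k : Fin n) : ∃ y ∈ Ioo (x k.succ) (x k.castSucc), D.eval y = 0 :=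
    exists_mem_Ioo_eq_zero_of_mul_neg (hx Fin.castSucc_lt_succ).le D.continuousOn (hsign k)
  choose y hy hyD using hroot
  have hy_anti : StrictAnti y := fun i j hij =>
    calc y j < x j.castSucc := (hy j).2
      _ ≤ x i.succ := hx.antitone (Fin.succ_le_castSucc_iff.mpr hij)
      _ < y i := (hy i).1
  have hz_notMem : z ∉ range y := by
    rintro ⟨k, rfl⟩
    exact lt_asymm (hz.trans_le (hx.antitone (Fin.le_last _))) (hy k).1
  refine eq_zero_of_natDegree_lt_card_of_eval_eq_zero D
    (Fin.cons_injective_iff.mpr ⟨hz_notMem, hy_anti.injective⟩) (Fin.cases hDz hyD) ?_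
  simpa using Nat.lt_succ_of_le hD

theorem exists_abs_le_abs_eval_of_alternating {n : ℕ} {p q : ℝ[X]} (hp : p.natDegree ≤ n)
    (hq : q.natDegree ≤ n) {x : Fin (n + 1) → ℝ} (hx : StrictAnti x) {z : ℝ}
    (hz : z < x (Fin.last n)) (hpq : p.eval z = q.eval z) {L : ℝ}
    (hpx : ∀ k, p.eval (x k) = (-1) ^ (k : ℕ) * L) : ∃ k, |L| ≤ |q.eval (x k)| := by
  by_contra! hlt
  have hsign (k : Fin (n + 1)) : 0 < (-1) ^ (k : ℕ) * L * (p - q).eval (x k) := by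
    have hpm : ((-1) ^ (k : ℕ) : ℝ) ^ 2 = 1 := by rw [← pow_mul, mul_comm, pow_mul]; norm_num
    have hq_le := le_abs_self ((-1) ^ (k : ℕ) * L * q.eval (x k))
    rw [abs_mul, abs_mul, abs_pow, abs_neg, abs_one, one_pow, one_mul] at hq_le
    have hL : |L| * |q.eval (x k)| < |L| * |L| :=
      mul_lt_mul_of_pos_left (hlt k) ((abs_nonneg _).trans_lt (hlt k))
    have hexpand : (-1) ^ (k : ℕ) * L * ((-1) ^ (k : ℕ) * L - q.eval (x k))
        = L * L - (-1) ^ (k : ℕ) * L * q.eval (x k) := by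
      linear_combination L ^ 2 * hpm
    rw [eval_sub, hpx, hexpand]
    linarith [abs_mul_abs_self L]
  have hDq : p - q = 0 := by
    refine eq_zero_of_sign_changes ((natDegree_sub_le p q).trans (max_le hp hq)) hx hz
      (by rw [eval_sub, hpq, sub_self]) fun k => ?_
    have h1 := hsign k.succ
    have h2 := hsign k.castSucc
    rw [Fin.val_succ, pow_succ] at h1
    rw [Fin.val_castSucc] at h2
    nlinarith [mul_pos h1 h2, sq_nonneg ((-1 : ℝ) ^ (k : ℕ) * L)]
  obtain rfl := sub_eq_zero.mp hDq
  have := hlt 0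
  rw [hpx, abs_mul, Fin.val_zero, pow_zero, abs_one, one_mul] at this
  exact this.false

end Polynomial

theorem Polynomial.Chebyshev.T_real_eq_C_mul_prod (n : ℕ) :
    T ℝ n = Polynomial.C (2 ^ (n - 1)) *
      ∏ k ∈ Finset.range n, (X - Polynomial.C (cos ((2 * k + 1) * π / (2 * n)))) := by
  have hinj : InjOn (fun k : ℕ => cos ((2 * k + 1) * π / (2 * n))) (Finset.range n) :=
    (Finset.range n).nodup_map_iff_injOn.mp (roots_T_real_nodup n)
  have hcard : Multiset.card (T ℝ n).roots = (T ℝ n).natDegree := by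
    rw [roots_T_real, Finset.card_val, Finset.card_image_of_injOn hinj]
    simp
  conv_lhs => rw [← C_leadingCoeff_mul_prod_multiset_X_sub_C hcard]
  rw [leadingCoeff_T, roots_T_real, ← Finset.prod_eq_multiset_prod, Finset.prod_image hinj]
  simp

noncomputable def shiftedChebyshevRoot (a b : ℝ) (n m : ℕ) : ℝ :=
  (b + a) / 2 + (b - a) / 2 * cos ((2 * m + 1) * π / (2 * n))

noncomputable def chebyshevMinimax (a b : ℝ) (n : ℕ) : ℝ :=
  ((b - a) / 2) ^ n / (2 ^ (n - 1) * ∏ m : Fin n, shiftedChebyshevRoot a b n m)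

section Segment

variable {a b : ℝ} {n : ℕ}

theorem shiftedChebyshevRoot_mem_Icc (hab : a ≤ b) (m : ℕ) :
    shiftedChebyshevRoot a b n m ∈ Icc a b := by
  have := neg_one_le_cos ((2 * m + 1) * π / (2 * n))
  have := cos_le_one ((2 * m + 1) * π / (2 * n))
  constructor <;> unfold shiftedChebyshevRoot <;> nlinarith

theorem shiftedChebyshevRoot_pos (ha : 0 < a) (hab : a ≤ b) (m : ℕ) :
    0 < shiftedChebyshevRoot a b n m :=
  ha.trans_le (shiftedChebyshevRoot_mem_Icc hab m).1

theorem chebyshevMinimax_pos (ha : 0 < a) (hab : a < b) : 0 < chebyshevMinimax a b n := by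
  have : 0 < ∏ m : Fin n, shiftedChebyshevRoot a b n m :=
    Finset.prod_pos fun m _ => shiftedChebyshevRoot_pos ha hab.le m
  have : 0 < b - a := sub_pos.mpr hab
  unfold chebyshevMinimax
  positivity

theorem prod_one_sub_div_shiftedChebyshevRoot (ha : 0 < a) (hab : a < b) (x : ℝ) :
    ∏ m : Fin n, (1 - x / shiftedChebyshevRoot a b n m) =
      (-1) ^ n * chebyshevMinimax a b n *
        (Chebyshev.T ℝ n).eval ((2 * x - (a + b)) / (b - a)) := by
  set s := (2 * x - (a + b)) / (b - a)
  have hba : b - a ≠ 0 := sub_ne_zero.mpr hab.ne'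
  have hroot (m : Fin n) := (shiftedChebyshevRoot_pos (n := n) ha hab.le m).ne'
  have hfactor (m : Fin n) : 1 - x / shiftedChebyshevRoot a b n m =
      -((b - a) / 2) * (s - cos ((2 * (m : ℕ) + 1) * π / (2 * n))) /
        shiftedChebyshevRoot a b n m := by
    rw [eq_div_iff (hroot m), sub_mul, div_mul_cancel₀ _ (hroot m)]
    unfold shiftedChebyshevRoot s
    field_simp
    ring
  rw [Finset.prod_congr rfl fun m _ => hfactor m, Finset.prod_div_distrib,
    Finset.prod_mul_distrib, Finset.prod_const, Finset.card_univ, Fintype.card_fin,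
    Fin.prod_univ_eq_prod_range (fun k => s - cos ((2 * k + 1) * π / (2 * n))),
    Chebyshev.T_real_eq_C_mul_prod, chebyshevMinimax]
  simp only [eval_mul, eval_C, eval_prod, eval_sub, eval_X]
  generalize ∏ k ∈ Finset.range n, (s - cos ((2 * (k : ℝ) + 1) * π / (2 * n))) = P
  rw [neg_pow]
  field_simp

theorem isGreatest_abs_prod_one_sub_div_shiftedChebyshevRoot (ha : 0 < a) (hab : a < b) :
    IsGreatest ((fun x => |∏ m : Fin n, (1 - x / shiftedChebyshevRoot a b n m)|) '' Icc a b)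
      (chebyshevMinimax a b n) := by
  have hM := chebyshevMinimax_pos (n := n) ha hab
  have hba : b - a ≠ 0 := sub_ne_zero.mpr hab.ne'
  refine ⟨⟨b, right_mem_Icc.mpr hab.le, ?_⟩, ?_⟩
  · dsimp only
    rw [prod_one_sub_div_shiftedChebyshevRoot ha hab,
      show (2 * b - (a + b)) / (b - a) = 1 by field_simp; ring, Chebyshev.T_eval_one]
    simp [abs_of_pos hM]
  · rintro _ ⟨x, hx, rfl⟩
    have hs : |(2 * x - (a + b)) / (b - a)| ≤ 1 := by
      rw [abs_div, abs_of_pos (sub_pos.mpr hab), div_le_one (sub_pos.mpr hab), abs_le]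
      constructor <;> linarith [hx.1, hx.2]
    dsimp only
    rw [prod_one_sub_div_shiftedChebyshevRoot ha hab, abs_mul, abs_mul, abs_pow, abs_neg,
      abs_one, one_pow, one_mul, abs_of_pos hM]
    exact mul_le_of_le_one_right hM.le (Chebyshev.abs_eval_T_real_le_one n hs)

theorem exists_chebyshevMinimax_le_abs_eval (ha : 0 < a) (hab : a < b) {q : ℝ[X]}
    (hq : q.natDegree ≤ n) (hq0 : q.eval 0 = 1) :
    ∃ x ∈ Icc a b, chebyshevMinimax a b n ≤ |q.eval x| := by
  have hM := chebyshevMinimax_pos (n := n) ha hab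
  have hba : b - a ≠ 0 := sub_ne_zero.mpr hab.ne'
  set p : ℝ[X] := ∏ m : Fin n, (1 - C (shiftedChebyshevRoot a b n m)⁻¹ * X)
  have hp_eval (x : ℝ) : p.eval x = ∏ m : Fin n, (1 - x / shiftedChebyshevRoot a b n m) := by
    simp [p, eval_prod, div_eq_inv_mul]
  set x : Fin (n + 1) → ℝ := fun k => (a + b) / 2 + (b - a) / 2 * Chebyshev.node n k
  have hx_mem (k : Fin (n + 1)) : x k ∈ Icc a b := by
    have := Chebyshev.node_mem_Icc (n := n) (i := k)
    simp only [x]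
    constructor <;> nlinarith [this.1, this.2]
  have hx_anti : StrictAnti x := fun i j hij => by
    have := Chebyshev.node_lt (Fin.is_le j) hij
    simp only [x]
    nlinarith
  have hpx (k : Fin (n + 1)) :
      p.eval (x k) = (-1) ^ (k : ℕ) * ((-1) ^ n * chebyshevMinimax a b n) := by
    rw [hp_eval, prod_one_sub_div_shiftedChebyshevRoot ha hab,
      show (2 * x k - (a + b)) / (b - a) = Chebyshev.node n k by simp only [x]; field_simp; ring,
      Chebyshev.eval_T_real_node (Finset.mem_Iic.mpr k.is_le)]
    ring
  obtain ⟨k, hk⟩ := exists_abs_le_abs_eval_of_alternating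
    ((natDegree_prod_one_sub_C_mul_X_le _ _).trans_eq (Finset.card_fin n)) hq hx_anti
    (ha.trans_le (hx_mem _).1) (by rw [hp_eval, hq0]; simp) hpx
  exact ⟨x k, hx_mem k, by simpa [abs_mul, abs_of_pos hM] using hk⟩

theorem exists_chebyshevMinimax_le_norm_eval (ha : 0 < a) (hab : a < b) {P : ℂ[X]}
    (hP : P.natDegree ≤ n) (hP0 : P.eval 0 = 1) :
    ∃ x ∈ Icc a b, chebyshevMinimax a b n ≤ ‖P.eval (x : ℂ)‖ := by
  obtain ⟨q, hq, hq_eval⟩ := P.exists_natDegree_le_eval_eq_re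
  obtain ⟨x, hx, hMx⟩ := exists_chebyshevMinimax_le_abs_eval ha hab (hq.trans hP)
    (by rw [hq_eval, Complex.ofReal_zero, hP0, Complex.one_re])
  exact ⟨x, hx, hMx.trans (hq_eval x ▸ Complex.abs_re_le_norm _)⟩

end Segment

theorem stmt12_general (a b : ℝ) (ha : 0 < a) (hab : a < b) (φ : ℝ) (n : ℕ)
    (μ : Fin n → ℝ)
    (hμ : ∀ m : Fin n, μ m = (b + a) / 2 +
      (b - a) / 2 * Real.cos ((2 * (m : ℝ) + 1) * π / (2 * n))) :
    IsLeast
      { r : ℝ | ∃ ν : Fin n → ℂ, (∀ m, ν m ≠ 0) ∧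
          r = sSup ((fun z : ℂ => ‖∏ m : Fin n, (1 - z / ν m)‖) ''
            ((fun x : ℝ => Complex.exp (φ * Complex.I) * (x : ℂ)) '' Set.Icc a b)) }
      (sSup ((fun x : ℝ => |∏ m : Fin n, (1 - x / μ m)|) '' Set.Icc a b)) := by
  obtain rfl : μ = fun m : Fin n => shiftedChebyshevRoot a b n m := funext hμ
  set e := Complex.exp (φ * Complex.I)
  have he : e ≠ 0 := Complex.exp_ne_zero _
  have hG := isGreatest_abs_prod_one_sub_div_shiftedChebyshevRoot (n := n) ha hab
  rw [hG.csSup_eq]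
  refine ⟨⟨fun m => e * shiftedChebyshevRoot a b n m, fun m => mul_ne_zero he
    (Complex.ofReal_ne_zero.mpr (shiftedChebyshevRoot_pos ha hab.le m).ne'), ?_⟩, ?_⟩
  · rw [Set.image_image, ← hG.csSup_eq]
    congr 1
    refine Set.image_congr fun x _ => ?_
    simp only [mul_div_mul_left _ _ he]
    rw [← Real.norm_eq_abs, ← Complex.norm_real]
    norm_cast
  · rintro _ ⟨ν, -, rfl⟩
    obtain ⟨x, hx, hMx⟩ := exists_chebyshevMinimax_le_norm_eval ha hab
      (P := ∏ m : Fin n, (1 - C (e / ν m) * X))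
      ((natDegree_prod_one_sub_C_mul_X_le _ _).trans_eq (Finset.card_fin n)) (by simp [eval_prod])
    have hbdd : BddAbove ((fun z : ℂ => ‖∏ m : Fin n, (1 - z / ν m)‖) ''
        ((fun x : ℝ => e * (x : ℂ)) '' Icc a b)) :=
      (isCompact_Icc.image (by fun_prop)).bddAbove_image (by fun_prop)
    refine hMx.trans (le_csSup hbdd ⟨e * x, ⟨x, hx, rfl⟩, ?_⟩)
    simp only [eval_prod, eval_sub, eval_one, eval_mul, eval_C, eval_X]
    congr 1
    exact Finset.prod_congr rfl fun m _ => by ring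

/-- Rotating the optimal Chebyshev points: for the segment `e^{iφ}[a,b]` on a ray
from the origin, the minimum over all parameter choices `ν_m` of
`max_{z ∈ e^{iφ}[a,b]} |∏ (1 - z/ν_m)|` equals the real minimax value
`max_{x ∈ [a,b]} |∏ (1 - x/μ_m)|`, and it is attained at `ν_m = e^{iφ} μ_m`. -/
theorem stmt12 (a b : ℝ) (ha : 0 < a) (hab : a < b) (φ : ℝ) (n : ℕ) (hn : 1 ≤ n)
    (μ : Fin n → ℝ)
    (hμ : ∀ m : Fin n, μ m = (b + a) / 2 +
      (b - a) / 2 * Real.cos ((2 * (m : ℝ) + 1) * π / (2 * n))) :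
    IsLeast
      { r : ℝ | ∃ ν : Fin n → ℂ, (∀ m, ν m ≠ 0) ∧
          r = sSup ((fun z : ℂ => ‖∏ m : Fin n, (1 - z / ν m)‖) ''
            ((fun x : ℝ => Complex.exp (φ * Complex.I) * (x : ℂ)) '' Set.Icc a b)) }
      (sSup ((fun x : ℝ => |∏ m : Fin n, (1 - x / μ m)|) '' Set.Icc a b)) :=
  stmt12_general a b ha hab φ n μ hμ
end

section
/- Let K be a compact subset of ℂ whose convex hull does not contain 0, and let μ₀ be the center of the smallest-angle enclosing disk S₀ (the disk containing K seen from the origin at minimal angle α₀). If K is a segment [p, q] ⊂ ℂ (with 0 ∉ [p,q]’s convex hull trivially, assuming 0 ∉ line through p,q or 0 outside segment), then μ₀ lies on the perpendicular bisector of [p,q] and on the circle through p, q, and 0, and [p,q] is a chord of S₀. -/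
/-!
If `q` were interior to `S₀ = closedBall μ₀ R₀`, the homothety centred at `p` with ratio `s`
slightly below `1` would map `S₀` to a disk still containing `[p, q]` but with a smaller ratio
`R / ‖μ‖`; so both endpoints lie on the boundary and `μ₀` lies on the perpendicular bisector of
`[p, q]`. That line passes through the centre `c` of the circle through `0`, `p`, `q`. Writing
`μ = c + w` on it, `‖μ - p‖² = ‖μ‖² - 2⟪w, p⟫`, and comparing `μ₀ = c + w` with the point
`c + (‖c‖ / ‖w‖) • w` of that circle, optimality reduces to the AM-GM inequality
`‖w‖² + ‖c‖² ≥ 2 ‖c‖ ‖w‖`, forcing `‖w‖ = ‖c‖`.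
-/

open AffineMap AffineSubspace Metric Filter Topology RealInnerProductSpace

section Normed

variable {E : Type*} [NormedAddCommGroup E] [NormedSpace ℝ E]

/-- `R / ‖μ‖ = sin (α / 2)`, where `α` is the angle under which `closedBall μ R` is seen
from `0`. -/
def IsMinAngleDisk (K : Set E) (μ₀ : E) (R₀ : ℝ) : Prop :=
  K ⊆ closedBall μ₀ R₀ ∧ R₀ < ‖μ₀‖ ∧
    ∀ (μ : E) (R : ℝ), 0 ≤ R → K ⊆ closedBall μ R → R < ‖μ‖ → R₀ / ‖μ₀‖ ≤ R / ‖μ‖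

lemma lt_norm_homothety_and_div_lt {a μ : E} {R s : ℝ} (ha : dist a μ ≤ R) (hR : 0 < R)
    (hRμ : R < ‖μ‖) (hs₀ : 0 < s) (hs₁ : s < 1) :
    s * R < ‖homothety a s μ‖ ∧ s * R / ‖homothety a s μ‖ < R / ‖μ‖ := by
  have hlow : ‖μ‖ - (1 - s) * R ≤ ‖homothety a s μ‖ := by
    have hdist : ‖homothety a s μ - μ‖ ≤ (1 - s) * R := by
      rw [← dist_eq_norm, dist_homothety_self, Real.norm_of_nonneg (by linarith)]
      exact mul_le_mul_of_nonneg_left ha (by linarith)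
    linarith [norm_sub_norm_le μ (homothety a s μ), norm_sub_rev μ (homothety a s μ)]
  have hpos : s * R < ‖homothety a s μ‖ := by nlinarith
  refine ⟨hpos, ?_⟩
  rw [div_lt_div_iff₀ ((mul_pos hs₀ hR).trans hpos) (hR.trans hRμ)]
  nlinarith [mul_pos (sub_pos.2 hs₁) hR]

lemma exists_segment_subset_closedBall_homothety {p q μ : E} {R : ℝ}
    (hp : p ∈ closedBall μ R) (hq : q ∈ ball μ R) :
    ∃ s ∈ Set.Ioo (0 : ℝ) 1, segment ℝ p q ⊆ closedBall (homothety p s μ) (s * R) := by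
  have hcont : ContinuousAt (fun s : ℝ ↦ dist q (homothety p s μ)) 1 := by
    simp only [homothety_apply, vsub_eq_sub, vadd_eq_add]
    fun_prop
  have hnear : ∀ᶠ s in 𝓝 (1 : ℝ), dist q (homothety p s μ) < s * R :=
    hcont.eventually_lt (continuousAt_id.mul continuousAt_const) (by simpa using hq)
  obtain ⟨s, hqs, hs⟩ :=
    ((hnear.filter_mono nhdsWithin_le_nhds).and (Ioo_mem_nhdsLT zero_lt_one)).exists
  refine ⟨s, hs, (convex_closedBall _ _).segment_subset ?_ (mem_closedBall.2 hqs.le)⟩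
  rw [mem_closedBall', dist_homothety_center, Real.norm_of_nonneg hs.1.le]
  exact mul_le_mul_of_nonneg_left (mem_closedBall.1 hp) hs.1.le

lemma IsMinAngleDisk.dist_right_eq {p q μ₀ : E} {R₀ : ℝ}
    (h : IsMinAngleDisk (segment ℝ p q) μ₀ R₀) : dist μ₀ q = R₀ := by
  obtain ⟨hsub, hout, hopt⟩ := h
  have hp := hsub (left_mem_segment ℝ p q)
  refine (mem_closedBall'.1 (hsub (right_mem_segment ℝ p q))).eq_or_lt.resolve_right
    fun hq ↦ ?_
  have hR₀ : 0 < R₀ := dist_nonneg.trans_lt hq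
  obtain ⟨s, hs, hseg⟩ := exists_segment_subset_closedBall_homothety hp (mem_ball'.2 hq)
  obtain ⟨hadm, hlt⟩ := lt_norm_homothety_and_div_lt (mem_closedBall.1 hp) hR₀ hout hs.1 hs.2
  exact (hopt _ _ (by positivity [hs.1]) hseg hadm).not_gt hlt

lemma IsMinAngleDisk.dist_left_eq {p q μ₀ : E} {R₀ : ℝ}
    (h : IsMinAngleDisk (segment ℝ p q) μ₀ R₀) : dist μ₀ p = R₀ :=
  IsMinAngleDisk.dist_right_eq (q := p) (p := q) (segment_symm ℝ p q ▸ h)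

end Normed

section InnerProduct

variable {E : Type*} [NormedAddCommGroup E] [InnerProductSpace ℝ E]

lemma eq_of_mul_sq_add_sq_le {a b t : ℝ} (ha : 0 < a) (hb : 0 < b) (ht : t * a = b)
    (h : t * (b ^ 2 + a ^ 2) ≤ b ^ 2 + t ^ 2 * a ^ 2) : a = b := by
  have hsq : b * (a - b) ^ 2 ≤ 0 := by
    have ht2 : t ^ 2 * a ^ 2 = b ^ 2 := by rw [← ht]; ring
    nlinarith [mul_le_mul_of_nonneg_left h ha.le]
  have : a - b = 0 :=
    pow_eq_zero_iff two_ne_zero |>.1 <|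
      le_antisymm (nonpos_of_mul_nonpos_right hsq hb) (sq_nonneg _)
  linarith

lemma norm_add_sub_sq_of_dist_eq_norm {c p : E} (hc : dist c p = ‖c‖) (w : E) :
    ‖c + w - p‖ ^ 2 = ‖c + w‖ ^ 2 - 2 * ⟪w, p⟫ := by
  have hc2 : ‖c - p‖ ^ 2 = ‖c‖ ^ 2 := by rw [← dist_eq_norm, hc]
  rw [norm_sub_sq_real] at hc2 ⊢
  rw [inner_add_left]
  linarith

lemma dist_eq_norm_of_forall_div_norm_le {p c μ₀ : E} (hc : dist c p = ‖c‖)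
    (hμ₀ : dist μ₀ p < ‖μ₀‖)
    (hmin : ∀ t : ℝ, dist (lineMap c μ₀ t) p < ‖lineMap c μ₀ t‖ →
      dist μ₀ p / ‖μ₀‖ ≤ dist (lineMap c μ₀ t) p / ‖lineMap c μ₀ t‖) :
    dist c μ₀ = ‖c‖ := by
  set w := μ₀ - c
  have hμ₀w : c + w = μ₀ := add_sub_cancel c μ₀
  have hsq (t : ℝ) : ‖c + t • w - p‖ ^ 2 = ‖c + t • w‖ ^ 2 - 2 * t * ⟪w, p⟫ := by
    rw [norm_add_sub_sq_of_dist_eq_norm hc, real_inner_smul_left, mul_assoc]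
  have hnorm (t : ℝ) : ‖c + t • w‖ ^ 2 = ‖c‖ ^ 2 + 2 * t * ⟪c, w⟫ + t ^ 2 * ‖w‖ ^ 2 := by
    rw [norm_add_sq_real, real_inner_smul_right, norm_smul, mul_pow, Real.norm_eq_abs, sq_abs]
    ring
  have hsq₀ : ‖μ₀ - p‖ ^ 2 = ‖μ₀‖ ^ 2 - 2 * ⟪w, p⟫ := by
    simpa [hμ₀w] using norm_add_sub_sq_of_dist_eq_norm hc w
  have hnorm₀ : ‖μ₀‖ ^ 2 = ‖c‖ ^ 2 + 2 * ⟪c, w⟫ + ‖w‖ ^ 2 := by simpa [hμ₀w] using hnorm 1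
  have hwp : 0 < ⟪w, p⟫ := by
    rw [dist_eq_norm] at hμ₀
    nlinarith [norm_nonneg (μ₀ - p)]
  have hw : 0 < ‖w‖ := norm_pos_iff.2 fun h ↦ by simp [h] at hwp
  have hc0 : 0 < ‖c‖ := norm_pos_iff.2 fun h ↦ by
    rw [h, dist_zero_left, norm_zero, norm_eq_zero] at hc
    simp [hc] at hwp
  set t := ‖c‖ / ‖w‖
  have ht : t * ‖w‖ = ‖c‖ := div_mul_cancel₀ _ hw.ne'
  have hadm : ‖c + t • w - p‖ < ‖c + t • w‖ := by
    refine lt_of_pow_lt_pow_left₀ 2 (norm_nonneg _) ?_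
    nlinarith [hsq t, mul_pos (div_pos hc0 hw) hwp]
  have hratio := hmin t (by rwa [lineMap_apply_module', add_comm, dist_eq_norm])
  rw [lineMap_apply_module', add_comm, dist_eq_norm, dist_eq_norm,
    div_le_div_iff₀ (dist_nonneg.trans_lt hμ₀) ((norm_nonneg _).trans_lt hadm)] at hratio
  have hratio2 := pow_le_pow_left₀ (by positivity) hratio 2
  rw [mul_pow, mul_pow, hsq, hsq₀] at hratio2
  have hgap : t * (‖c‖ ^ 2 + ‖w‖ ^ 2) ≤ ‖c‖ ^ 2 + t ^ 2 * ‖w‖ ^ 2 := by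
    have : ⟪w, p⟫ * (t * ‖μ₀‖ ^ 2) ≤ ⟪w, p⟫ * ‖c + t • w‖ ^ 2 := by nlinarith
    have := le_of_mul_le_mul_left this hwp
    rw [hnorm₀, hnorm] at this
    linarith
  rw [dist_comm, dist_eq_norm]
  exact eq_of_mul_sq_add_sq_le hw hc0 ht hgap

lemma exists_dist_eq_norm_of_notMem_affineSpan {p q : E} (hpq : p ≠ q)
    (h0 : (0 : E) ∉ line[ℝ, p, q]) : ∃ c : E, dist c p = ‖c‖ ∧ dist c q = ‖c‖ := by
  have hind : AffineIndependent ℝ ![(0 : E), p, q] := by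
    rw [affineIndependent_iff_not_collinear_set]
    exact fun hcol ↦ h0 (hcol.mem_affineSpan_of_mem_of_ne (by simp) (by simp) (by simp) hpq)
  let T : Affine.Simplex ℝ E 2 := ⟨_, hind⟩
  have hT (i : Fin 3) : dist (T.points i) T.circumcenter = T.circumradius :=
    T.dist_circumcenter_eq_circumradius i
  refine ⟨T.circumcenter, ?_, ?_⟩ <;> rw [← dist_zero_left, dist_comm]
  exacts [(hT 1).trans (hT 0).symm, (hT 2).trans (hT 0).symm]

lemma segment_subset_closedBall_of_mem_perpBisector {p q μ : E} (h : μ ∈ perpBisector p q) :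
    segment ℝ p q ⊆ closedBall μ (dist μ p) :=
  (convex_closedBall _ _).segment_subset (mem_closedBall'.2 le_rfl)
    (mem_closedBall'.2 (mem_perpBisector_iff_dist_eq.1 h).ge)

lemma IsMinAngleDisk.dist_eq_norm_of_equidistant {p q c μ₀ : E} {R₀ : ℝ}
    (h : IsMinAngleDisk (segment ℝ p q) μ₀ R₀) (hcp : dist c p = ‖c‖)
    (hcq : dist c q = ‖c‖) : dist c μ₀ = ‖c‖ := by
  have hR₀ : dist μ₀ p = R₀ := h.dist_left_eq
  have hμ₀ : μ₀ ∈ perpBisector p q :=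
    mem_perpBisector_iff_dist_eq.2 (hR₀.trans h.dist_right_eq.symm)
  have hc : c ∈ perpBisector p q := mem_perpBisector_iff_dist_eq.2 (hcp.trans hcq.symm)
  refine dist_eq_norm_of_forall_div_norm_le hcp (hR₀ ▸ h.2.1) fun t ht ↦ hR₀ ▸ h.2.2 _ _
    dist_nonneg (segment_subset_closedBall_of_mem_perpBisector (lineMap_mem t hc hμ₀)) ht

end InnerProduct

theorem stmt19_general (p q : ℂ) (hpq : p ≠ q)
    (hline : ∀ t : ℝ, (0 : ℂ) ≠ p + t • (q - p))
    (μ₀ : ℂ) (R₀ : ℝ)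
    (hsub : segment ℝ p q ⊆ Metric.closedBall μ₀ R₀)
    (hout : R₀ < ‖μ₀‖)
    (hopt : ∀ (μ : ℂ) (R : ℝ), 0 ≤ R → segment ℝ p q ⊆ Metric.closedBall μ R →
      R < ‖μ‖ → R₀ / ‖μ₀‖ ≤ R / ‖μ‖) :
    ‖μ₀ - p‖ = R₀ ∧ ‖μ₀ - q‖ = R₀ ∧
      ∃ c : ℂ, ∃ ρ : ℝ, ‖c - p‖ = ρ ∧ ‖c - q‖ = ρ ∧
        ‖c‖ = ρ ∧ ‖c - μ₀‖ = ρ := by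
  have hS : IsMinAngleDisk (segment ℝ p q) μ₀ R₀ := ⟨hsub, hout, hopt⟩
  have h0 : (0 : ℂ) ∉ line[ℝ, p, q] := by
    rw [mem_affineSpan_pair_iff_exists_lineMap_eq]
    rintro ⟨t, ht⟩
    exact hline t (by rw [← ht, lineMap_apply_module', add_comm])
  obtain ⟨c, hcp, hcq⟩ := exists_dist_eq_norm_of_notMem_affineSpan hpq h0
  simp only [← dist_eq_norm]
  exact ⟨hS.dist_left_eq, hS.dist_right_eq, c, ‖c‖, hcp, hcq, rfl,
    hS.dist_eq_norm_of_equidistant hcp hcq⟩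

/-- Proposition 2.1: if `K = [p, q]` is a segment in `ℂ` not containing `0` (and `0`
is not on the line through `p, q`), and `S₀ = closedBall μ₀ R₀` is an enclosing disk
not containing `0` minimizing the visual angle from the origin (i.e. minimizing
`R/|μ|`), then `μ₀` is equidistant from `p` and `q` at distance `R₀` (the segment is
a chord, so `μ₀` lies on the perpendicular bisector of `[p,q]`) and `μ₀` lies on the
circle through `p`, `q`, and `0`. -/
theorem stmt19 (p q : ℂ) (hpq : p ≠ q)
    (hline : ∀ t : ℝ, (0 : ℂ) ≠ p + t • (q - p))
    (μ₀ : ℂ) (R₀ : ℝ) (hR₀ : 0 ≤ R₀)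
    (hsub : segment ℝ p q ⊆ Metric.closedBall μ₀ R₀)
    (hout : R₀ < ‖μ₀‖)
    (hopt : ∀ (μ : ℂ) (R : ℝ), 0 ≤ R → segment ℝ p q ⊆ Metric.closedBall μ R →
      R < ‖μ‖ → R₀ / ‖μ₀‖ ≤ R / ‖μ‖) :
    ‖μ₀ - p‖ = R₀ ∧ ‖μ₀ - q‖ = R₀ ∧
      ∃ c : ℂ, ∃ ρ : ℝ, ‖c - p‖ = ρ ∧ ‖c - q‖ = ρ ∧
        ‖c‖ = ρ ∧ ‖c - μ₀‖ = ρ :=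
  stmt19_general p q hpq hline μ₀ R₀ hsub hout hopt
end
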